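/- arXiv:1408.5402 — 4 statements merged into one kernel-verified Lean document; each statement's English description precedes it below -/
import Mathlib

section
/- For every integer n ≥ 1 and every w ∈ ℂ with |w| < 1, the map φ_n(w;·) sends the unit circle S¹ into itself, satisfies φ_n(w; z)^n = (z^n + conj(w))/(1 + w·z^n) for every z ∈ S¹, and satisfies φ_n(−w; φ_n(w; z)) = z for every z ∈ S¹; in particular φ_n(w;·) is a bijection of S¹ onto itself with inverse φ_n(−w;·). -/
/-!
On the unit circle `1 + conj w · z⁻ⁿ = conj a` with `a = 1 + w zⁿ`, and `Re a > 0`. Hence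
`Log (conj a) − Log a = −2i arg a`, so `φ_n(w; z)` is `z` rotated by `−2 arg a / n`, and
`φ_n(w; z)ⁿ = zⁿ conj a / a = (zⁿ + conj w) / a`. For `ζ = φ_n(w; z)` this gives
`1 − w ζⁿ = (1 − |w|²) / a`, whose argument is `−arg a`, so `φ_n(−w; ·)` rotates `ζ` back to `z`.
-/

open Complex

/-- `φ_n(w; z) = z · exp((1/n) · (Log(1 + conj(w)·z^{−n}) − Log(1 + w·z^{n})))`,
where `Log` is the principal branch of the complex logarithm. -/
noncomputable def phiMap (n : ℕ) (w : ℂ) (z : ℂ) : ℂ :=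
  z * Complex.exp (((n : ℂ))⁻¹ *
    (Complex.log (1 + (starRingEnd ℂ) w * (z⁻¹) ^ n) - Complex.log (1 + w * z ^ n)))

open ComplexConjugate

namespace Complex

theorem log_conj_sub_log {a : ℂ} (ha : a.arg ≠ Real.pi) :
    log (conj a) - log a = ((-2 * a.arg : ℝ) : ℂ) * I := by
  rw [log_conj a ha, ← neg_sub, sub_conj, log_im]
  push_cast
  ring

end Complex

theorem phiMap_pow {n : ℕ} {w z : ℂ} (hn : n ≠ 0) (hz : z ≠ 0)
    (hconj : 1 + conj w * z⁻¹ ^ n ≠ 0) (ha : 1 + w * z ^ n ≠ 0) :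
    phiMap n w z ^ n = (z ^ n + conj w) / (1 + w * z ^ n) := by
  have hnC : (n : ℂ) ≠ 0 := Nat.cast_ne_zero.mpr hn
  rw [phiMap, mul_pow, ← exp_nat_mul, ← mul_assoc, mul_inv_cancel₀ hnC, one_mul, exp_sub,
    exp_log hconj, exp_log ha, ← mul_div_assoc, mul_add, mul_one, mul_left_comm, ← mul_pow,
    mul_inv_cancel₀ hz, one_pow, mul_one]

section Circle

variable {n : ℕ} {w z : ℂ}

theorem one_add_mul_pow_mem_slitPlane (hw : ‖w‖ < 1) (hz : ‖z‖ = 1) :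
    1 + w * z ^ n ∈ slitPlane :=
  mem_slitPlane_of_norm_lt_one (by simpa [hz] using hw)

theorem one_add_conj_mul_inv_pow (hz : ‖z‖ = 1) :
    1 + conj w * z⁻¹ ^ n = conj (1 + w * z ^ n) := by
  simp [inv_eq_conj hz]

theorem phiMap_eq_mul_exp_arg (hz : ‖z‖ = 1) (ha : (1 + w * z ^ n).arg ≠ Real.pi) :
    phiMap n w z = z * exp (((-2 * (1 + w * z ^ n).arg / n : ℝ) : ℂ) * I) := by
  rw [phiMap, one_add_conj_mul_inv_pow hz, log_conj_sub_log ha]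
  push_cast
  ring_nf

theorem norm_phiMap (hw : ‖w‖ < 1) (hz : ‖z‖ = 1) : ‖phiMap n w z‖ = 1 := by
  rw [phiMap_eq_mul_exp_arg hz (slitPlane_arg_ne_pi (one_add_mul_pow_mem_slitPlane hw hz)),
    norm_mul, hz, norm_exp_ofReal_mul_I, mul_one]

theorem mapsTo_phiMap_sphere (hw : ‖w‖ < 1) :
    Set.MapsTo (phiMap n w) (Metric.sphere 0 1) (Metric.sphere 0 1) := fun z hz => by
  rw [mem_sphere_zero_iff_norm] at hz ⊢
  exact norm_phiMap hw hz

theorem phiMap_pow_of_norm_eq_one (hn : n ≠ 0) (hw : ‖w‖ < 1) (hz : ‖z‖ = 1) :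
    phiMap n w z ^ n = (z ^ n + conj w) / (1 + w * z ^ n) := by
  have ha := slitPlane_ne_zero (one_add_mul_pow_mem_slitPlane (n := n) hw hz)
  refine phiMap_pow hn (norm_ne_zero_iff.mp (by simp [hz])) ?_ ha
  rwa [one_add_conj_mul_inv_pow hz, map_ne_zero]

theorem one_add_neg_mul_phiMap_pow (hn : n ≠ 0) (hw : ‖w‖ < 1) (hz : ‖z‖ = 1) :
    1 + -w * phiMap n w z ^ n = ((1 - normSq w : ℝ) : ℂ) * (1 + w * z ^ n)⁻¹ := by
  have ha := slitPlane_ne_zero (one_add_mul_pow_mem_slitPlane (n := n) hw hz)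
  rw [phiMap_pow_of_norm_eq_one hn hw hz, ofReal_sub, ofReal_one, ← mul_conj]
  field_simp
  ring

theorem phiMap_neg_phiMap (hn : n ≠ 0) (hw : ‖w‖ < 1) (hz : ‖z‖ = 1) :
    phiMap n (-w) (phiMap n w z) = z := by
  have ha := slitPlane_arg_ne_pi (one_add_mul_pow_mem_slitPlane (n := n) hw hz)
  have hnormSq : 0 < 1 - normSq w := by
    rw [sub_pos, normSq_eq_norm_sq]
    exact pow_lt_one₀ (norm_nonneg w) hw two_ne_zero
  have harg : (1 + -w * phiMap n w z ^ n).arg = -(1 + w * z ^ n).arg := by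
    rw [one_add_neg_mul_phiMap_pow hn hw hz, arg_real_mul _ hnormSq, arg_inv, if_neg ha]
  have hζ : ‖phiMap n w z‖ = 1 := norm_phiMap hw hz
  have ha' := slitPlane_arg_ne_pi
    (one_add_mul_pow_mem_slitPlane (n := n) (by rwa [norm_neg]) hζ)
  rw [phiMap_eq_mul_exp_arg hζ ha', harg, phiMap_eq_mul_exp_arg hz ha, mul_assoc, ← exp_add]
  push_cast
  ring_nf
  rw [exp_zero, mul_one]

end Circle

/-- For every integer `n ≥ 1` and `|w| < 1`, the map `φ_n(w;·)` sends the unit circle into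
itself, satisfies `φ_n(w; z)^n = (z^n + conj w)/(1 + w z^n)` on the circle, satisfies
`φ_n(−w; φ_n(w; z)) = z` on the circle, and is a bijection of the circle onto itself
with inverse `φ_n(−w;·)`. -/
theorem phiMap_circle_properties (n : ℕ) (hn : 1 ≤ n) (w : ℂ) (hw : ‖w‖ < 1) :
    (∀ z : ℂ, ‖z‖ = 1 → ‖phiMap n w z‖ = 1) ∧
    (∀ z : ℂ, ‖z‖ = 1 →
      (phiMap n w z) ^ n = (z ^ n + (starRingEnd ℂ) w) / (1 + w * z ^ n)) ∧
    (∀ z : ℂ, ‖z‖ = 1 → phiMap n (-w) (phiMap n w z) = z) ∧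
    (∀ z : ℂ, ‖z‖ = 1 → phiMap n w (phiMap n (-w) z) = z) ∧
    Set.BijOn (phiMap n w) (Metric.sphere (0 : ℂ) 1) (Metric.sphere (0 : ℂ) 1) := by
  have hn0 : n ≠ 0 := Nat.one_le_iff_ne_zero.mp hn
  have hw' : ‖-w‖ < 1 := by rwa [norm_neg]
  have hright : ∀ z : ℂ, ‖z‖ = 1 → phiMap n w (phiMap n (-w) z) = z := fun z hz => by
    simpa only [neg_neg] using phiMap_neg_phiMap hn0 hw' hz
  refine ⟨fun z hz => norm_phiMap hw hz, fun z hz => phiMap_pow_of_norm_eq_one hn0 hw hz,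
    fun z hz => phiMap_neg_phiMap hn0 hw hz, hright, ?_⟩
  exact Set.InvOn.bijOn
    ⟨fun z hz => phiMap_neg_phiMap hn0 hw (mem_sphere_zero_iff_norm.mp hz),
      fun z hz => hright z (mem_sphere_zero_iff_norm.mp hz)⟩
    (mapsTo_phiMap_sphere hw) (mapsTo_phiMap_sphere hw')
end

section
/- Fix a bijection p of the positive integers and a sequence (w_n) with |w_n| < 1 for all n. If Σ_{n≥1} |w_n|/n < ∞, then the functions Σ_N converge uniformly on ℝ as N → ∞ to a continuous, nondecreasing, surjective function Σ : ℝ → ℝ satisfying Σ(θ + 2π) = Σ(θ) + 2π for all θ. -/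
open Filter

/-- The lift `Φ_n(w; θ) = θ − (2/n)·arctan( Im(w e^{inθ}) / (1 + Re(w e^{inθ})) )`. -/
noncomputable def PhiLift (n : ℕ+) (w : ℂ) (θ : ℝ) : ℝ :=
  θ - (2 / ((n : ℕ) : ℝ)) * Real.arctan
    ((w * Complex.exp ((((n : ℕ) : ℂ)) * (θ : ℂ) * Complex.I)).im /
      (1 + (w * Complex.exp ((((n : ℕ) : ℂ)) * (θ : ℂ) * Complex.I)).re))

/-- `Σ_0(θ) = θ` and `Σ_N = Φ_{N′}(w_{N′};·) ∘ ⋯ ∘ Φ_{1′}(w_{1′};·)`, where `p(n) = n′`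
is a fixed bijection (ordering) of the positive integers. -/
noncomputable def SigLift (p : ℕ+ ≃ ℕ+) (w : ℕ+ → ℂ) : ℕ → ℝ → ℝ
  | 0 => fun θ => θ
  | N + 1 => fun θ =>
      PhiLift (p ⟨N + 1, N.succ_pos⟩) (w (p ⟨N + 1, N.succ_pos⟩)) (SigLift p w N θ)

/-!
Write `z = w e^{inθ}`. Each `Φ_n(w; ·)` has derivative `(1 - |w|²) / |1 + z|² > 0` and moves every
point by `(2/n)·|arctan (Im z / (1 + Re z))| ≤ 2π|w|/n`. So consecutive `Σ_N` are uniformly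
`2π|w_{N′}|/N′`-close, a summable sequence, and the `Σ_N` are uniformly Cauchy. The uniform limit
inherits continuity, monotonicity and `Σ(θ + 2π) = Σ(θ) + 2π` from the `Σ_N`, and stays within a
bounded distance of the identity, which together with continuity makes it surjective.
-/

theorem tendstoUniformly_of_dist_le_of_summable {α β : Type*} [PseudoMetricSpace β]
    [CompleteSpace β] {f : ℕ → α → β} (d : ℕ → ℝ) (hf : ∀ n x, dist (f n x) (f n.succ x) ≤ d n)
    (hd : Summable d) :
    ∃ F : α → β, TendstoUniformly f F atTop ∧ ∀ x, dist (f 0 x) (F x) ≤ ∑' n, d n := by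
  choose F hF using fun x => cauchySeq_tendsto_of_complete
    (cauchySeq_of_dist_le_of_summable d (hf · x) hd)
  refine ⟨F, Metric.tendstoUniformly_iff.2 fun ε hε => ?_,
    fun x => dist_le_tsum_of_dist_le_of_tendsto₀ d (hf · x) hd (hF x)⟩
  filter_upwards [(tendsto_sum_nat_add d).eventually (gt_mem_nhds hε)] with n hn x
  rw [dist_comm]
  calc dist (f n x) (F x) ≤ ∑' m, d (n + m) :=
        dist_le_tsum_of_dist_le_of_tendsto d (hf · x) hd (hF x) n
    _ < ε := by simpa only [add_comm n] using hn

theorem surjective_of_abs_sub_le {S : ℝ → ℝ} (hS : Continuous S) (C : ℝ)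
    (h : ∀ x, |S x - x| ≤ C) : Function.Surjective S := by
  refine hS.surjective ?_ ?_
  · refine tendsto_atTop_mono (fun x => ?_) (tendsto_atTop_add_const_right atTop (-C) tendsto_id)
    linarith [(abs_le.1 (h x)).1, id_eq x]
  · refine tendsto_atBot_mono (fun x => ?_) (tendsto_atBot_add_const_right atBot C tendsto_id)
    linarith [(abs_le.1 (h x)).2, id_eq x]

theorem one_add_re_pos {z : ℂ} (hz : ‖z‖ < 1) : 0 < 1 + z.re := by
  linarith [neg_le_of_abs_le (Complex.abs_re_le_norm z)]

theorem abs_arctan_le_abs (x : ℝ) : |Real.arctan x| ≤ |x| := by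
  have key : ∀ y : ℝ, 0 ≤ y → Real.arctan y ≤ y := fun y hy => by
    simpa only [Real.tan_arctan] using
      Real.le_tan (Real.arctan_nonneg.2 hy) (Real.arctan_lt_pi_div_two y)
  rcases le_total 0 x with hx | hx
  · rw [abs_of_nonneg hx, abs_of_nonneg (Real.arctan_nonneg.2 hx)]
    exact key x hx
  · rw [abs_of_nonpos hx, abs_of_nonpos (Real.arctan_le_zero.2 hx), ← Real.arctan_neg]
    exact key (-x) (neg_nonneg.2 hx)

theorem abs_arctan_im_div_one_add_re_le {z : ℂ} (hz : ‖z‖ < 1) :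
    |Real.arctan (z.im / (1 + z.re))| ≤ Real.pi * ‖z‖ := by
  rcases le_or_gt (1 / 2) ‖z‖ with hbig | hsmall
  · calc |Real.arctan (z.im / (1 + z.re))| ≤ Real.pi / 2 :=
          (abs_lt.2 ⟨Real.neg_pi_div_two_lt_arctan _, Real.arctan_lt_pi_div_two _⟩).le
      _ ≤ Real.pi * ‖z‖ := by nlinarith [Real.pi_pos]
  · have hpos := one_add_re_pos hz
    have hre := neg_le_of_abs_le (Complex.abs_re_le_norm z)
    calc |Real.arctan (z.im / (1 + z.re))| ≤ |z.im / (1 + z.re)| := abs_arctan_le_abs _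
      _ = |z.im| / (1 + z.re) := by rw [abs_div, abs_of_pos hpos]
      _ ≤ 2 * ‖z‖ := by
          rw [div_le_iff₀ hpos]
          nlinarith [Complex.abs_im_le_norm z, norm_nonneg z]
      _ ≤ Real.pi * ‖z‖ := by nlinarith [Real.pi_gt_three, norm_nonneg z]

section PhiLift

variable (n : ℕ+) (w : ℂ)

noncomputable def rotTerm (θ : ℝ) : ℂ :=
  w * Complex.exp ((((n : ℕ) : ℂ)) * (θ : ℂ) * Complex.I)

theorem phiLift_eq (θ : ℝ) :
    PhiLift n w θ =
      θ - (2 / ((n : ℕ) : ℝ)) * Real.arctan ((rotTerm n w θ).im / (1 + (rotTerm n w θ).re)) :=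
  rfl

theorem norm_rotTerm (θ : ℝ) : ‖rotTerm n w θ‖ = ‖w‖ := by
  simp [rotTerm, Complex.norm_exp]

theorem rotTerm_add_two_pi (θ : ℝ) : rotTerm n w (θ + 2 * Real.pi) = rotTerm n w θ := by
  have : (((n : ℕ) : ℂ)) * ((θ + 2 * Real.pi : ℝ) : ℂ) * Complex.I
      = (((n : ℕ) : ℂ)) * (θ : ℂ) * Complex.I + (n : ℕ) * (2 * Real.pi * Complex.I) := by
    push_cast; ring
  rw [rotTerm, rotTerm, this, Complex.exp_add, Complex.exp_nat_mul, Complex.exp_two_pi_mul_I,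
    one_pow, mul_one]

theorem hasDerivAt_rotTerm (θ : ℝ) :
    HasDerivAt (rotTerm n w) ((((n : ℕ) : ℂ)) * Complex.I * rotTerm n w θ) θ := by
  have hlin : HasDerivAt (fun t : ℝ => (((n : ℕ) : ℂ)) * (t : ℂ) * Complex.I)
      ((((n : ℕ) : ℂ)) * Complex.I) θ := by
    simpa using ((Complex.ofRealCLM.hasDerivAt (x := θ)).const_mul ((n : ℕ) : ℂ)).mul_const
      Complex.I
  refine ((hlin.cexp).const_mul w).congr_deriv ?_
  unfold rotTerm; ring

theorem phiLift_add_two_pi (θ : ℝ) :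
    PhiLift n w (θ + 2 * Real.pi) = PhiLift n w θ + 2 * Real.pi := by
  rw [phiLift_eq, phiLift_eq, rotTerm_add_two_pi]
  ring

theorem abs_phiLift_sub_le (hw : ‖w‖ < 1) (θ : ℝ) :
    |PhiLift n w θ - θ| ≤ 2 * Real.pi * (‖w‖ / ((n : ℕ) : ℝ)) := by
  have hbound := abs_arctan_im_div_one_add_re_le ((norm_rotTerm n w θ).symm ▸ hw)
  rw [norm_rotTerm] at hbound
  rw [phiLift_eq, sub_sub_cancel_left, abs_neg, abs_mul, abs_of_pos (by positivity)]
  calc 2 / ((n : ℕ) : ℝ) * |Real.arctan ((rotTerm n w θ).im / (1 + (rotTerm n w θ).re))|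
      ≤ 2 / ((n : ℕ) : ℝ) * (Real.pi * ‖w‖) := by gcongr
    _ = 2 * Real.pi * (‖w‖ / ((n : ℕ) : ℝ)) := by ring

theorem hasDerivAt_phiLift (hw : ‖w‖ < 1) (θ : ℝ) :
    HasDerivAt (PhiLift n w)
      ((1 - ‖w‖ ^ 2) / ((1 + (rotTerm n w θ).re) ^ 2 + (rotTerm n w θ).im ^ 2)) θ := by
  set z := rotTerm n w θ with hz
  have hre : HasDerivAt (fun t => (rotTerm n w t).re) (-((n : ℕ) : ℝ) * z.im) θ := by
    simpa [Function.comp_def] using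
      Complex.reCLM.hasFDerivAt.comp_hasDerivAt θ (hasDerivAt_rotTerm n w θ)
  have him : HasDerivAt (fun t => (rotTerm n w t).im) (((n : ℕ) : ℝ) * z.re) θ := by
    simpa [Function.comp_def] using
      Complex.imCLM.hasFDerivAt.comp_hasDerivAt θ (hasDerivAt_rotTerm n w θ)
  have hpos : 0 < 1 + z.re := one_add_re_pos ((norm_rotTerm n w θ).symm ▸ hw)
  have hnormSq : z.re ^ 2 + z.im ^ 2 = ‖w‖ ^ 2 := by
    rw [← norm_rotTerm n w θ, ← hz, Complex.sq_norm, Complex.normSq_apply]; ring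
  refine ((hasDerivAt_id θ).sub (((him.div (hre.const_add 1) hpos.ne').arctan).const_mul
    (2 / ((n : ℕ) : ℝ)))).congr_deriv ?_
  simp only [Pi.div_apply, ← hz, ← hnormSq]
  field_simp
  ring

theorem strictMono_phiLift (hw : ‖w‖ < 1) : StrictMono (PhiLift n w) := by
  refine strictMono_of_hasDerivAt_pos (hasDerivAt_phiLift n w hw) fun θ => ?_
  have hpos := one_add_re_pos ((norm_rotTerm n w θ).symm ▸ hw)
  have hw2 : ‖w‖ ^ 2 < 1 := by nlinarith [norm_nonneg w]
  exact div_pos (by linarith) (by positivity)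

theorem continuous_phiLift (hw : ‖w‖ < 1) : Continuous (PhiLift n w) :=
  continuous_iff_continuousAt.2 fun θ => (hasDerivAt_phiLift n w hw θ).continuousAt

end PhiLift

section SigLift

variable (p : ℕ+ ≃ ℕ+) {w : ℕ+ → ℂ}

theorem sigLift_succ (N : ℕ) (θ : ℝ) :
    SigLift p w (N + 1) θ = PhiLift (p N.succPNat) (w (p N.succPNat)) (SigLift p w N θ) :=
  rfl

theorem monotone_sigLift (hw : ∀ n, ‖w n‖ < 1) (N : ℕ) : Monotone (SigLift p w N) := by
  induction N with
  | zero => exact monotone_id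
  | succ N ih => exact (strictMono_phiLift _ _ (hw _)).monotone.comp ih

theorem continuous_sigLift (hw : ∀ n, ‖w n‖ < 1) (N : ℕ) : Continuous (SigLift p w N) := by
  induction N with
  | zero => exact continuous_id
  | succ N ih => exact (continuous_phiLift _ _ (hw _)).comp ih

theorem sigLift_add_two_pi (N : ℕ) (θ : ℝ) :
    SigLift p w N (θ + 2 * Real.pi) = SigLift p w N θ + 2 * Real.pi := by
  induction N with
  | zero => rfl
  | succ N ih => rw [sigLift_succ, sigLift_succ, ih, phiLift_add_two_pi]

theorem dist_sigLift_succ_le (hw : ∀ n, ‖w n‖ < 1) (N : ℕ) (θ : ℝ) :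
    dist (SigLift p w N θ) (SigLift p w (N + 1) θ) ≤
      2 * Real.pi * (‖w (p N.succPNat)‖ / ((p N.succPNat : ℕ) : ℝ)) := by
  rw [dist_comm, Real.dist_eq, sigLift_succ]
  exact abs_phiLift_sub_le _ _ (hw _) _

end SigLift

/-- If `Σ_{n≥1} |w_n|/n < ∞`, then the `Σ_N` converge uniformly on `ℝ` to a continuous,
nondecreasing, surjective function `Σ : ℝ → ℝ` satisfying `Σ(θ + 2π) = Σ(θ) + 2π`. -/
theorem sigLift_tendstoUniformly_of_summable (p : ℕ+ ≃ ℕ+) (w : ℕ+ → ℂ)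
    (hw : ∀ n, ‖w n‖ < 1)
    (hsum : Summable fun n : ℕ+ => ‖w n‖ / ((n : ℕ) : ℝ)) :
    ∃ S : ℝ → ℝ, TendstoUniformly (fun N => SigLift p w N) S atTop ∧
      Continuous S ∧ Monotone S ∧ Function.Surjective S ∧
      ∀ θ : ℝ, S (θ + 2 * Real.pi) = S θ + 2 * Real.pi := by
  set c : ℕ → ℝ := fun N => 2 * Real.pi * (‖w (p N.succPNat)‖ / ((p N.succPNat : ℕ) : ℝ))
  have hc : Summable c :=
    ((hsum.comp_injective p.injective).comp_injective Nat.succPNat_injective).mul_left _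
  obtain ⟨S, hS, hS₀⟩ := tendstoUniformly_of_dist_le_of_summable c (dist_sigLift_succ_le p hw) hc
  have hlim : ∀ θ, Tendsto (fun N => SigLift p w N θ) atTop (nhds (S θ)) := hS.tendsto_at
  have hcont : Continuous S := hS.continuous (Frequently.of_forall (continuous_sigLift p hw))
  refine ⟨S, hS, hcont, fun a b hab => ?_, ?_, fun θ => ?_⟩
  · exact le_of_tendsto_of_tendsto' (hlim a) (hlim b) fun N => monotone_sigLift p hw N hab
  · exact surjective_of_abs_sub_le hcont (∑' N, c N) fun θ =>
      (abs_sub_comm _ _).trans_le (hS₀ θ)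
  · refine tendsto_nhds_unique ?_ ((hlim θ).add_const _)
    simpa only [sigLift_add_two_pi] using hlim (θ + 2 * Real.pi)
end

section
/- For every integer s ≥ 1 there exists a constant c = c(s) > 0, independent of n and w, such that for every integer n ≥ 1, every w ∈ ℂ with |w| < 1, and every θ ∈ ℝ, the s-th derivative of the function B_n(θ) = log((1 − |w|²)/|1 + w e^{inθ}|²) satisfies |B_n^{(s)}(θ)| ≤ c · n^s · |w| · (1 − |w|)^{−s}. -/
/-!
Since `‖w e^{inθ}‖ < 1`, the Taylor series of `log (1 + z)` gives
`B_n(θ) = log (1 - |w|²) - 2 Re ∑_{k ≥ 1} (-1)^{k+1} w^k e^{iknθ} / k`.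
This is a trigonometric series whose termwise `s`-th derivatives are dominated by
`(nk)^s |w|^k / k`, so `|B_n^{(s)}(θ)| ≤ 2 n^s ∑_k k^{s-1} |w|^k`. Finally
`k^{s-1} ≤ (s-1)! · C(k+s-2, s-1)` and `∑_{m} C(m+s-1, s-1) x^m = (1-x)^{-s}` bound the last
series by `(s-1)! |w| (1-|w|)^{-s}`, so `c = 2 (s-1)!` works.
-/

/-- `B_n(θ) = log((1 − |w|²)/|1 + w e^{inθ}|²)`. -/
noncomputable def Bfun (n : ℕ) (w : ℂ) (θ : ℝ) : ℝ :=
  Real.log ((1 - ‖w‖ ^ 2) /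
    ‖1 + w * Complex.exp ((n : ℂ) * (θ : ℂ) * Complex.I)‖ ^ 2)

open Complex
open scoped Nat

section TrigonometricSeries

lemma iteratedDeriv_cexp_mul_ofReal (b : ℂ) (j : ℕ) :
    iteratedDeriv j (fun t : ℝ => exp (b * t)) = fun t : ℝ => b ^ j * exp (b * t) := by
  induction j with
  | zero => simp
  | succ j ih =>
    ext t
    have h : HasDerivAt (fun t : ℝ => exp (b * t)) (exp (b * t) * b) t := by
      simpa using ((hasDerivAt_id t).ofReal_comp.const_mul b).cexp
    rw [iteratedDeriv_succ, ih, deriv_const_mul_field, h.deriv]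
    ring

lemma norm_iteratedFDeriv_const_mul_cexp (a : ℂ) (ν : ℝ) (j : ℕ) (x : ℝ) :
    ‖iteratedFDeriv ℝ j (fun t : ℝ => a * exp (ν * I * t)) x‖ = |ν| ^ j * ‖a‖ := by
  rw [norm_iteratedFDeriv_eq_norm_iteratedDeriv, iteratedDeriv_const_mul_field,
    iteratedDeriv_cexp_mul_ofReal]
  simp [norm_exp, mul_comm]

lemma contDiff_const_mul_cexp (a : ℂ) (ν : ℝ) {n : WithTop ℕ∞} :
    ContDiff ℝ n fun t : ℝ => a * exp (ν * I * t) :=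
  contDiff_const.mul (contDiff_const.mul ofRealCLM.contDiff).cexp

variable {c : ℕ → ℂ} {ν : ℕ → ℝ} {N : ℕ}

lemma contDiff_tsum_const_mul_cexp (hc : ∀ j ≤ N, Summable fun k => |ν k| ^ j * ‖c k‖) :
    ContDiff ℝ N fun t : ℝ => ∑' k, c k * exp (ν k * I * t) :=
  contDiff_tsum (fun k => contDiff_const_mul_cexp (c k) (ν k))
    (fun j hj => hc j (by exact_mod_cast hj))
    (fun j k x _ => (norm_iteratedFDeriv_const_mul_cexp (c k) (ν k) j x).le)

lemma norm_iteratedDeriv_tsum_const_mul_cexp_le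
    (hc : ∀ j ≤ N, Summable fun k => |ν k| ^ j * ‖c k‖) (x : ℝ) :
    ‖iteratedDeriv N (fun t : ℝ => ∑' k, c k * exp (ν k * I * t)) x‖ ≤
      ∑' k, |ν k| ^ N * ‖c k‖ := by
  rw [← norm_iteratedFDeriv_eq_norm_iteratedDeriv,
    iteratedFDeriv_tsum_apply (fun k => contDiff_const_mul_cexp (c k) (ν k))
      (fun j hj => hc j (by exact_mod_cast hj))
      (fun j k x _ => (norm_iteratedFDeriv_const_mul_cexp (c k) (ν k) j x).le) le_rfl]
  exact tsum_of_norm_bounded (hc N le_rfl).hasSum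
    fun k => (norm_iteratedFDeriv_const_mul_cexp (c k) (ν k) N x).le

end TrigonometricSeries

lemma abs_iteratedDeriv_re_le {f : ℝ → ℂ} {n : ℕ} {x : ℝ} (hf : ContDiffAt ℝ n f x) :
    |iteratedDeriv n (fun t => (f t).re) x| ≤ ‖iteratedDeriv n f x‖ := by
  rw [← Real.norm_eq_abs, ← norm_iteratedFDeriv_eq_norm_iteratedDeriv,
    ← norm_iteratedFDeriv_eq_norm_iteratedDeriv, show (fun t => (f t).re) = reCLM ∘ f from rfl,
    reCLM.iteratedFDeriv_comp_left hf le_rfl]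
  simpa using reCLM.norm_compContinuousMultilinearMap_le (iteratedFDeriv ℝ n f x)

lemma tsum_natCast_pow_succ_mul_pow_div_le (t : ℕ) {x : ℝ} (hx0 : 0 ≤ x) (hx1 : x < 1) :
    ∑' k : ℕ, (k : ℝ) ^ (t + 1) * x ^ k / k ≤ t ! * x / (1 - x) ^ (t + 1) := by
  have hx : ‖x‖ < 1 := by rwa [Real.norm_of_nonneg hx0]
  have hg := (hasSum_choose_mul_geometric_of_norm_lt_one t hx).mul_left (t ! * x)
  have hle : ∀ m : ℕ, ((m + 1 : ℕ) : ℝ) ^ (t + 1) * x ^ (m + 1) / (m + 1 : ℕ) ≤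
      t ! * x * ((m + t).choose t * x ^ m) := by
    intro m
    have hasc : ((m + 1 : ℕ) : ℝ) ^ t ≤ t ! * (m + t).choose t := by
      exact_mod_cast (Nat.pow_succ_le_ascFactorial (m + 1) t).trans_eq
        (Nat.ascFactorial_eq_factorial_mul_choose m t)
    calc ((m + 1 : ℕ) : ℝ) ^ (t + 1) * x ^ (m + 1) / (m + 1 : ℕ)
        = ((m + 1 : ℕ) : ℝ) ^ t * x * x ^ m := by field_simp; ring
      _ ≤ t ! * (m + t).choose t * x * x ^ m := by gcongr
      _ = t ! * x * ((m + t).choose t * x ^ m) := by ring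
  have hs : Summable fun m : ℕ => ((m + 1 : ℕ) : ℝ) ^ (t + 1) * x ^ (m + 1) / (m + 1 : ℕ) :=
    hg.summable.of_nonneg_of_le (fun m => by positivity) hle
  calc ∑' k : ℕ, (k : ℝ) ^ (t + 1) * x ^ k / k
      = ∑' m : ℕ, ((m + 1 : ℕ) : ℝ) ^ (t + 1) * x ^ (m + 1) / (m + 1 : ℕ) := by
        rw [tsum_eq_zero_add' (f := fun k : ℕ => (k : ℝ) ^ (t + 1) * x ^ k / k) hs,
          Nat.cast_zero, div_zero, zero_add]
    _ ≤ ∑' m : ℕ, t ! * x * ((m + t).choose t * x ^ m) := hs.tsum_le_tsum hle hg.summable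
    _ = t ! * x * (1 / (1 - x) ^ (t + 1)) := hg.tsum_eq
    _ = t ! * x / (1 - x) ^ (t + 1) := by ring

/-- `log (1 + w) = ∑ₖ logCoeff w k`; the `k = 0` term vanishes because `x / 0 = 0`. -/
noncomputable def logCoeff (w : ℂ) (k : ℕ) : ℂ := (-1) ^ (k + 1) * w ^ k / k

lemma abs_mul_pow_mul_norm_logCoeff (n : ℕ) (w : ℂ) (j k : ℕ) :
    |(n : ℝ) * k| ^ j * ‖logCoeff w k‖ = n ^ j * ((k : ℝ) ^ j * ‖w‖ ^ k / k) := by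
  simp [logCoeff, abs_mul, mul_pow, mul_div_assoc, mul_assoc]

lemma summable_abs_mul_pow_mul_norm_logCoeff (n : ℕ) {w : ℂ} (hw : ‖w‖ < 1) (j : ℕ) :
    Summable fun k : ℕ => |(n : ℝ) * k| ^ j * ‖logCoeff w k‖ := by
  have hx : ‖‖w‖‖ < 1 := by rwa [norm_norm]
  simp_rw [abs_mul_pow_mul_norm_logCoeff]
  refine .mul_left _ ((summable_pow_mul_geometric_of_norm_lt_one j hx).of_nonneg_of_le
    (fun k => by positivity) fun k => ?_)
  rw [mul_div_assoc]
  gcongr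
  exact div_nat_le_self_of_nonnneg (by positivity) k

lemma hasSum_logCoeff_mul_cexp (n : ℕ) {w : ℂ} (hw : ‖w‖ < 1) (θ : ℝ) :
    HasSum (fun k : ℕ => logCoeff w k * exp (↑((n : ℝ) * k) * I * θ))
      (log (1 + w * exp (n * θ * I))) := by
  have hz : ‖w * exp (n * θ * I)‖ < 1 := by simpa [norm_exp] using hw
  convert hasSum_taylorSeries_log hz using 2 with k
  rw [logCoeff, mul_pow, ← exp_nat_mul]
  push_cast
  ring_nf

lemma Bfun_eq_log_add_re_tsum (n : ℕ) {w : ℂ} (hw : ‖w‖ < 1) :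
    Bfun n w = fun θ : ℝ => Real.log (1 - ‖w‖ ^ 2) +
      -2 * (∑' k, logCoeff w k * exp (↑((n : ℝ) * k) * I * θ)).re := by
  ext θ
  have hw2 : 0 < 1 - ‖w‖ ^ 2 := by nlinarith [norm_nonneg w]
  have hz : ‖w * exp (n * θ * I)‖ < 1 := by simpa [norm_exp] using hw
  have hz' : 0 < ‖1 + w * exp (n * θ * I)‖ :=
    norm_pos_iff.2 fun h => by simp [eq_neg_of_add_eq_zero_right h] at hz
  rw [Bfun, Real.log_div hw2.ne' (pow_pos hz' 2).ne', Real.log_pow,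
    (hasSum_logCoeff_mul_cexp n hw θ).tsum_eq, log_re]
  push_cast
  ring

/-- For every `s ≥ 1` there is a constant `c = c(s) > 0`, independent of `n` and `w`, such
that for every `n ≥ 1`, every `|w| < 1` and every `θ`,
`|B_n^{(s)}(θ)| ≤ c · n^s · |w| · (1 − |w|)^{−s}`. -/
theorem iteratedDeriv_Bfun_bound (s : ℕ) (hs : 1 ≤ s) :
    ∃ c : ℝ, 0 < c ∧ ∀ n : ℕ, 1 ≤ n → ∀ w : ℂ, ‖w‖ < 1 → ∀ θ : ℝ,
      |iteratedDeriv s (Bfun n w) θ| ≤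
        c * (n : ℝ) ^ s * ‖w‖ * ((1 - ‖w‖) ^ s)⁻¹ := by
  obtain ⟨t, rfl⟩ : ∃ t, s = t + 1 := ⟨s - 1, by omega⟩
  refine ⟨2 * t !, by positivity, fun n _ w hw θ => ?_⟩
  have hc := fun j (_ : j ≤ t + 1) => summable_abs_mul_pow_mul_norm_logCoeff n hw j
  rw [Bfun_eq_log_add_re_tsum n hw, iteratedDeriv_const_add t.succ_pos,
    iteratedDeriv_const_mul_field, abs_mul, abs_neg, abs_two]
  calc 2 * |iteratedDeriv (t + 1)
        (fun θ : ℝ => (∑' k, logCoeff w k * exp (↑((n : ℝ) * k) * I * θ)).re) θ|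
      ≤ 2 * ∑' k : ℕ, |(n : ℝ) * k| ^ (t + 1) * ‖logCoeff w k‖ := by
        gcongr
        exact (abs_iteratedDeriv_re_le (contDiff_tsum_const_mul_cexp hc).contDiffAt).trans
          (norm_iteratedDeriv_tsum_const_mul_cexp_le hc θ)
    _ = 2 * (n ^ (t + 1) * ∑' k : ℕ, (k : ℝ) ^ (t + 1) * ‖w‖ ^ k / k) := by
        simp_rw [abs_mul_pow_mul_norm_logCoeff, tsum_mul_left]
    _ ≤ 2 * (n ^ (t + 1) * (t ! * ‖w‖ / (1 - ‖w‖) ^ (t + 1))) := by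
        gcongr
        exact tsum_natCast_pow_succ_mul_pow_div_le t (norm_nonneg w) hw
    _ = 2 * t ! * n ^ (t + 1) * ‖w‖ * ((1 - ‖w‖) ^ (t + 1))⁻¹ := by ring
end

section
/- Let P and Q be coprime complex polynomials with Q(z) ≠ 0 for every z with |z| = 1, and suppose that the map z ↦ P(z)/Q(z) restricts to a bijection of the unit circle S¹ onto itself. Then max(deg P, deg Q) is odd. (The degree of a rational homeomorphism of S¹, as a map of the Riemann sphere, is odd.) -/
/-!
Let `f = P / Q`, `N = max (deg P) (deg Q)`, and for a polynomial `F` of degree at most `N` let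
`F* z = z ^ N * conj (F (conj z)⁻¹)` be its reflection in the unit circle. As `|P| = |Q|` on the
circle, `P P* = Q Q*`, and coprimality forces `P* = c Q` and `Q* = c P`. Hence for `|w| = 1` the
polynomial `R = P - w Q` satisfies `R* = ε R`, so its roots are permuted by the involution
`z ↦ (conj z)⁻¹`, whose fixed points are the points of the circle. For all but finitely many `w`
(those avoiding `f 0` and the critical values of `f`), `R` has simple roots and `R 0 ≠ 0`, so it has
exactly `N` roots. Since `f` is injective on the circle, exactly one of them lies on the circle,
and the others come in pairs: `N` is odd.
-/

open Polynomial ComplexConjugate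

namespace Finset

theorem odd_card_iff_odd_card_filter_eq_of_involution {α : Type*} [DecidableEq α]
    {s : Finset α} {g : α → α} (hg : ∀ a ∈ s, g a ∈ s) (hgg : ∀ a ∈ s, g (g a) = a) :
    Odd #s ↔ Odd #{a ∈ s | g a = a} := by
  have hfree : Even #{a ∈ s | ¬g a = a} := by
    have hsum : ∑ _a ∈ {a ∈ s | ¬g a = a}, (1 : ZMod 2) = 0 := by
      refine sum_involution (fun a _ => g a) (fun _ _ => by decide)
        (fun a ha _ => (mem_filter.1 ha).2) (fun a ha => ?_)
        (fun a ha => hgg a (mem_filter.1 ha).1)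
      obtain ⟨has, hne⟩ := mem_filter.1 ha
      exact mem_filter.2 ⟨hg a has, by rw [hgg a has]; exact Ne.symm hne⟩
    rw [sum_const, nsmul_one, ZMod.natCast_eq_zero_iff] at hsum
    exact even_iff_two_dvd.2 hsum
  rw [← card_filter_add_card_filter_not (fun a => g a = a), Nat.odd_add]
  simp [hfree]

end Finset

theorem Complex.infinite_sphere_zero {r : ℝ} (hr : 0 < r) :
    (Metric.sphere (0 : ℂ) r).Infinite := by
  refine (isConnected_sphere ?_ 0 hr.le).isPreconnected.infinite_of_nontrivial
    ⟨r, by simp [hr.le], -r, by simp [hr.le], by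
      rw [Ne, CharZero.eq_neg_self_iff]; exact_mod_cast hr.ne'⟩
  rw [Complex.rank_real_complex]
  norm_num

theorem Complex.inv_conj_eq_self_iff {z : ℂ} (hz : z ≠ 0) : (conj z)⁻¹ = z ↔ ‖z‖ = 1 := by
  refine ⟨fun h => ?_, fun h => by rw [← Complex.inv_eq_conj h, inv_inv]⟩
  have h' := congrArg norm h
  rw [norm_inv, Complex.norm_conj, inv_eq_iff_eq_inv] at h'
  have hpos : 0 < ‖z‖ := norm_pos_iff.2 hz
  field_simp at h'
  nlinarith

namespace Polynomial

section Wronskian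

theorem isRoot_wronskian_of_isRoot_sub_C_mul {R : Type*} [CommRing R] {P Q : R[X]} {w z : R}
    (h : (P - C w * Q).IsRoot z) (h' : (derivative (P - C w * Q)).IsRoot z) :
    (wronskian P Q).IsRoot z := by
  simp only [IsRoot, wronskian, derivative_sub, derivative_C_mul, eval_sub, eval_mul, eval_C] at *
  linear_combination (derivative Q).eval z * h - Q.eval z * h'

variable {K : Type*} [Field K] {P Q : K[X]}

theorem _root_.IsCoprime.eval_div_eval_eq_of_isRoot_sub_C_mul (h : IsCoprime P Q) {w z : K}
    (hz : (P - C w * Q).IsRoot z) : P.eval z / Q.eval z = w := by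
  have hPz : P.eval z = w * Q.eval z := by simpa [sub_eq_zero] using hz
  have hQz : Q.eval z ≠ 0 := fun hQz => by
    simpa [coe_aeval_eq_eval, hQz, hPz] using aeval_ne_zero_of_isCoprime h z
  rw [hPz, mul_div_cancel_right₀ _ hQz]

theorem _root_.IsCoprime.wronskian_ne_zero_of_injOn [CharZero K] (h : IsCoprime P Q) {s : Set K}
    (hs : s.Nontrivial) (hinj : Set.InjOn (fun z => P.eval z / Q.eval z) s) :
    wronskian P Q ≠ 0 := by
  intro hW
  obtain ⟨hP, hQ⟩ := h.wronskian_eq_zero_iff.1 hW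
  obtain ⟨x, hx, y, hy, hxy⟩ := hs
  refine hxy (hinj hx hy ?_)
  rw [derivative_eq_zero] at hP hQ
  rw [eq_C_of_natDegree_eq_zero hP, eq_C_of_natDegree_eq_zero hQ]
  simp only [eval_C]

theorem _root_.IsCoprime.finite_setOf_not_separable_or_isRoot_sub_C_mul [IsAlgClosed K]
    (h : IsCoprime P Q) (hW : wronskian P Q ≠ 0) (a : K) :
    {w | ¬(P - C w * Q).Separable ∨ (P - C w * Q).IsRoot a}.Finite := by
  classical
  refine ((insert a (wronskian P Q).roots.toFinset).image
    fun z => P.eval z / Q.eval z).finite_toSet.subset fun w hw => ?_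
  simp only [Finset.coe_image, Finset.coe_insert, Set.mem_image, Set.mem_insert_iff,
    Finset.mem_coe, Multiset.mem_toFinset, mem_roots hW]
  rcases hw with hsep | ha
  · obtain ⟨z, hz, hz'⟩ : ∃ z, (P - C w * Q).IsRoot z ∧ (derivative (P - C w * Q)).IsRoot z := by
      by_contra! hno
      refine hsep ((isCoprime_iff_aeval_ne_zero_of_isAlgClosed K K _ _).2 fun z => ?_)
      simpa [coe_aeval_eq_eval, or_iff_not_imp_left] using hno z
    exact ⟨z, Or.inr (isRoot_wronskian_of_isRoot_sub_C_mul hz hz'),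
      h.eval_div_eval_eq_of_isRoot_sub_C_mul hz⟩
  · exact ⟨a, Or.inl rfl, h.eval_div_eval_eq_of_isRoot_sub_C_mul ha⟩

end Wronskian

noncomputable def conjReflect (N : ℕ) (f : ℂ[X]) : ℂ[X] :=
  (f.map (starRingEnd ℂ)).reflect N

section ConjReflect

variable {N : ℕ} {f : ℂ[X]}

theorem eval_conjReflect (hf : f.natDegree ≤ N) {z : ℂ} (hz : z ≠ 0) :
    (conjReflect N f).eval z = z ^ N * conj (f.eval (conj z)⁻¹) := by
  have : Invertible z⁻¹ := invertibleOfNonzero (inv_ne_zero hz)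
  have h := eval₂_reflect_mul_pow (RingHom.id ℂ) z⁻¹ N (f.map (starRingEnd ℂ))
    (natDegree_map_le.trans hf)
  have hconj : conj (f.eval (conj z)⁻¹) = (f.map (starRingEnd ℂ)).eval z⁻¹ := by
    rw [eval_map, ← eval₂_hom, map_inv₀, Complex.conj_conj]
  rw [invOf_eq_inv, inv_inv, eval₂_id, eval₂_id, ← hconj] at h
  rw [conjReflect, ← h, inv_pow, mul_left_comm, mul_inv_cancel₀ (pow_ne_zero N hz), mul_one]

theorem eval_conjReflect_of_norm_eq_one (hf : f.natDegree ≤ N) {z : ℂ} (hz : ‖z‖ = 1) :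
    (conjReflect N f).eval z = z ^ N * conj (f.eval z) := by
  rw [eval_conjReflect hf (norm_ne_zero_iff.1 (hz ▸ one_ne_zero)), ← Complex.inv_eq_conj hz,
    inv_inv]

theorem coeff_zero_conjReflect : (conjReflect N f).coeff 0 = conj (f.coeff N) := by
  rw [conjReflect, coeff_reflect, revAt_le (Nat.zero_le N), Nat.sub_zero, coeff_map]

theorem conjReflect_eq_zero_iff : conjReflect N f = 0 ↔ f = 0 := by
  rw [conjReflect, reflect_eq_zero_iff, Polynomial.map_eq_zero_iff (RingHom.injective _)]

theorem conjReflect_sub (g : ℂ[X]) :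
    conjReflect N (f - g) = conjReflect N f - conjReflect N g := by
  rw [conjReflect, Polynomial.map_sub, reflect_sub, conjReflect, conjReflect]

theorem conjReflect_C_mul (a : ℂ) : conjReflect N (C a * f) = C (conj a) * conjReflect N f := by
  rw [conjReflect, Polynomial.map_mul, map_C, reflect_C_mul, conjReflect]

end ConjReflect

variable {P Q : ℂ[X]}

theorem mul_conjReflect_eq_of_norm_eval_eq {N : ℕ} (hP : P.natDegree ≤ N) (hQ : Q.natDegree ≤ N)
    (h : ∀ z : ℂ, ‖z‖ = 1 → ‖P.eval z‖ = ‖Q.eval z‖) :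
    P * conjReflect N P = Q * conjReflect N Q := by
  refine eq_of_infinite_eval_eq _ _ ((Complex.infinite_sphere_zero one_pos).mono fun z hz => ?_)
  have hz : ‖z‖ = 1 := mem_sphere_zero_iff_norm.1 hz
  simp only [Set.mem_ofPred_eq, eval_mul, eval_conjReflect_of_norm_eq_one hP hz,
    eval_conjReflect_of_norm_eq_one hQ hz]
  rw [mul_left_comm, Complex.mul_conj', mul_left_comm, Complex.mul_conj', h z hz]

theorem _root_.IsCoprime.coeff_max_natDegree_ne_zero {R : Type*} [CommRing R] [Nontrivial R]
    {P Q : R[X]} (h : IsCoprime P Q) :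
    P.coeff (max P.natDegree Q.natDegree) ≠ 0 ∨ Q.coeff (max P.natDegree Q.natDegree) ≠ 0 := by
  by_contra! hc
  rcases le_total Q.natDegree P.natDegree with hle | hle
  · obtain rfl : P = 0 :=
      leadingCoeff_eq_zero.1 (by rw [leadingCoeff, ← max_eq_left hle]; exact hc.1)
    rw [natDegree_zero, zero_max] at hc
    exact not_isCoprime_zero_zero (leadingCoeff_eq_zero.1 hc.2 ▸ h)
  · obtain rfl : Q = 0 :=
      leadingCoeff_eq_zero.1 (by rw [leadingCoeff, ← max_eq_right hle]; exact hc.2)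
    rw [natDegree_zero, _root_.max_zero] at hc
    exact not_isCoprime_zero_zero (leadingCoeff_eq_zero.1 hc.1 ▸ h)

theorem _root_.IsCoprime.conjReflect (h : IsCoprime P Q) :
    IsCoprime (conjReflect (max P.natDegree Q.natDegree) P)
      (conjReflect (max P.natDegree Q.natDegree) Q) := by
  refine (isCoprime_iff_aeval_ne_zero_of_isAlgClosed ℂ ℂ _ _).2 fun a => ?_
  simp only [coe_aeval_eq_eval]
  rcases eq_or_ne a 0 with rfl | ha
  · simpa only [← coeff_zero_eq_eval_zero, coeff_zero_conjReflect, ne_eq, map_eq_zero]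
      using h.coeff_max_natDegree_ne_zero
  · simpa [eval_conjReflect (le_max_left _ _) ha, eval_conjReflect (le_max_right _ _) ha, ha,
      coe_aeval_eq_eval] using aeval_ne_zero_of_isCoprime h (conj a)⁻¹

theorem _root_.IsCoprime.exists_conjReflect_eq_C_mul (h : IsCoprime P Q)
    (hPQ : P * conjReflect (max P.natDegree Q.natDegree) P =
      Q * conjReflect (max P.natDegree Q.natDegree) Q) :
    ∃ c : ℂ, conjReflect (max P.natDegree Q.natDegree) P = C c * Q ∧
      conjReflect (max P.natDegree Q.natDegree) Q = C c * P := by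
  set N := max P.natDegree Q.natDegree
  have hQ0 : Q ≠ 0 := by
    rintro rfl
    rw [zero_mul, mul_eq_zero, conjReflect_eq_zero_iff, or_self] at hPQ
    exact not_isCoprime_zero_zero (hPQ ▸ h)
  obtain ⟨u, hu⟩ : Q ∣ conjReflect N P := h.symm.dvd_of_dvd_mul_left ⟨conjReflect N Q, hPQ⟩
  have hv : conjReflect N Q = P * u := mul_left_cancel₀ hQ0 (by rw [← hPQ, hu]; ring)
  obtain ⟨c, -, rfl⟩ := isUnit_iff.1 (h.conjReflect.isUnit_of_dvd' (Dvd.intro_left _ hu.symm)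
    (Dvd.intro_left _ hv.symm))
  exact ⟨c, by rw [hu, mul_comm], by rw [hv, mul_comm]⟩

theorem conjReflect_sub_C_mul {N : ℕ} {c w : ℂ} (hP : conjReflect N P = C c * Q)
    (hQ : conjReflect N Q = C c * P) (hw : ‖w‖ = 1) :
    conjReflect N (P - C w * Q) = C (-(c * conj w)) * (P - C w * Q) := by
  have hww : C (conj w) * C w = (1 : ℂ[X]) := by
    rw [← C_mul, mul_comm, Complex.mul_conj', hw, Complex.ofReal_one, one_pow, C_1]
  rw [conjReflect_sub, conjReflect_C_mul, hP, hQ, map_neg, C_mul]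
  linear_combination (-(C c * Q)) * hww

theorem isRoot_inv_conj_of_conjReflect_eq_C_mul {N : ℕ} {R : ℂ[X]} {ε : ℂ}
    (hR : conjReflect N R = C ε * R) (hε : ε ≠ 0) (hdeg : R.natDegree ≤ N) {z : ℂ} (hz : z ≠ 0)
    (hRz : R.IsRoot z) : R.IsRoot (conj z)⁻¹ := by
  have h := eval_conjReflect hdeg (inv_ne_zero ((_root_.map_ne_zero (starRingEnd ℂ)).2 hz))
  rw [hR, map_inv₀, Complex.conj_conj, inv_inv, hRz.eq_zero, map_zero, mul_zero, eval_mul,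
    eval_C, mul_eq_zero] at h
  exact h.resolve_left hε

theorem odd_of_conjReflect_eq_C_mul {N : ℕ} {R : ℂ[X]} {ε : ℂ} (hR : conjReflect N R = C ε * R)
    (hdeg : R.natDegree ≤ N) (hsep : R.Separable) (h0 : ¬R.IsRoot 0)
    (hcirc : ∃! z : ℂ, ‖z‖ = 1 ∧ R.IsRoot z) : Odd N := by
  classical
  have hR0 : R ≠ 0 := by rintro rfl; exact h0 eval_zero
  have hε : ε ≠ 0 := by
    rintro rfl
    rw [C_0, zero_mul, conjReflect_eq_zero_iff] at hR
    exact hR0 hR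
  have hN : R.natDegree = N := by
    refine le_antisymm hdeg (le_natDegree_of_ne_zero fun hc => h0 ?_)
    have h := congrArg (coeff · 0) hR
    simp only [coeff_zero_conjReflect, hc, map_zero, coeff_C_mul, zero_eq_mul, hε, false_or] at h
    rwa [IsRoot, ← coeff_zero_eq_eval_zero]
  have hne : ∀ z ∈ R.roots.toFinset, z ≠ 0 := fun z hz h => by
    rw [Multiset.mem_toFinset, mem_roots hR0, h] at hz
    exact h0 hz
  have hfix : (R.roots.toFinset.filter fun z => (conj z)⁻¹ = z).card = 1 := by
    obtain ⟨z₀, hz₀, huniq⟩ := hcirc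
    rw [Finset.card_eq_one]
    refine ⟨z₀, Finset.ext fun z => ?_⟩
    rw [Finset.mem_filter, Finset.mem_singleton]
    refine ⟨fun ⟨hz, hzfix⟩ => huniq z ⟨(Complex.inv_conj_eq_self_iff (hne z hz)).1 hzfix, ?_⟩,
      ?_⟩
    · rwa [Multiset.mem_toFinset, mem_roots hR0] at hz
    · rintro rfl
      have hz : z ∈ R.roots.toFinset := by rw [Multiset.mem_toFinset, mem_roots hR0]; exact hz₀.2
      exact ⟨hz, (Complex.inv_conj_eq_self_iff (hne z hz)).2 hz₀.1⟩
  rw [← hN, ← IsAlgClosed.card_roots_eq_natDegree,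
    ← Multiset.toFinset_card_of_nodup (nodup_roots hsep),
    Finset.odd_card_iff_odd_card_filter_eq_of_involution (g := fun z => (conj z)⁻¹) _
      (fun z _ => by simp), hfix]
  · exact odd_one
  · intro z hz
    have hz0 := hne z hz
    rw [Multiset.mem_toFinset, mem_roots hR0] at hz ⊢
    exact isRoot_inv_conj_of_conjReflect_eq_C_mul hR hε hdeg hz0 hz

end Polynomial

/-- The degree of a rational homeomorphism of the circle, as a map of the Riemann sphere,
is odd: if `P, Q` are coprime, `Q` has no zeros on `S¹`, and `z ↦ P(z)/Q(z)` restricts to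
a bijection of `S¹` onto itself, then `max(deg P, deg Q)` is odd. -/
theorem rational_circle_homeo_odd_degree (P Q : Polynomial ℂ) (hcop : IsCoprime P Q)
    (hQ : ∀ z : ℂ, ‖z‖ = 1 → Q.eval z ≠ 0)
    (hbij : Set.BijOn (fun z => P.eval z / Q.eval z)
      (Metric.sphere (0 : ℂ) 1) (Metric.sphere (0 : ℂ) 1)) :
    Odd (max P.natDegree Q.natDegree) := by
  have hnorm : ∀ z : ℂ, ‖z‖ = 1 → ‖P.eval z‖ = ‖Q.eval z‖ := fun z hz => by
    have h := hbij.mapsTo (mem_sphere_zero_iff_norm.2 hz)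
    rwa [mem_sphere_zero_iff_norm, norm_div,
      div_eq_one_iff_eq (norm_ne_zero_iff.2 (hQ z hz))] at h
  obtain ⟨c, hPc, hQc⟩ := hcop.exists_conjReflect_eq_C_mul
    (mul_conjReflect_eq_of_norm_eval_eq (le_max_left _ _) (le_max_right _ _) hnorm)
  have hW : wronskian P Q ≠ 0 :=
    hcop.wronskian_ne_zero_of_injOn ⟨1, by simp, -1, by simp, by norm_num⟩ hbij.injOn
  obtain ⟨w, hw, hgood⟩ := ((Complex.infinite_sphere_zero one_pos).sdiff
    (hcop.finite_setOf_not_separable_or_isRoot_sub_C_mul hW 0)).nonempty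
  rw [Set.mem_ofPred_eq, not_or, not_not] at hgood
  have hw1 : ‖w‖ = 1 := mem_sphere_zero_iff_norm.1 hw
  refine odd_of_conjReflect_eq_C_mul (conjReflect_sub_C_mul hPc hQc hw1)
    ((natDegree_sub_le _ _).trans (max_le_max le_rfl (natDegree_C_mul_le _ _)))
    hgood.1 hgood.2 ?_
  obtain ⟨z₀, hz₀, rfl⟩ := hbij.surjOn hw
  refine ⟨z₀, ⟨mem_sphere_zero_iff_norm.1 hz₀, ?_⟩, fun z ⟨hz, hRz⟩ =>
    hbij.injOn (mem_sphere_zero_iff_norm.2 hz) hz₀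
      (hcop.eval_div_eval_eq_of_isRoot_sub_C_mul hRz)⟩
  simp [IsRoot, div_mul_cancel₀ _ (hQ z₀ (mem_sphere_zero_iff_norm.1 hz₀))]
end
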